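/- arXiv:2310.13969 — 3 statements merged into one kernel-verified Lean document; each statement's English description precedes it below -/
import Mathlib

section
/- Fix integers d ≥ 1 and K ≥ 1, reals ρ > 0, λ ≥ 0, μ ∈ ℝ, vectors C = (c_1,…,c_d) ∈ ℝ^d, ω ∈ ℝ^d with nonnegative entries, γ_k ∈ ℝ^d and ζ_k ∈ ℝ^d for k = 1,…,K, and define F : ℝ^d → ℝ by F(ζ) = λ Σ_{j=1}^d ω_j|ζ_j| + Σ_{k=1}^K ⟨γ_k, ζ_k − ζ⟩ + (ρ/2) Σ_{k=1}^K ‖ζ_k − ζ‖² + μ Σ_{j=1}^d c_j ζ_j + (ρ/2)(Σ_{j=1}^d c_j ζ_j)². Then for every coordinate index j and every ζ ∈ ℝ^d, the function t ↦ F(ζ with its j-th coordinate replaced by t) attains its global minimum at the unique point t̂ = Shrink{ (1/ρ) Σ_{k=1}^K γ_{k,j} + Σ_{k=1}^K ζ_{k,j} − (1/ρ)μ c_j − c_j Σ_{m≠j} c_m ζ_m , λω_j/ρ } / (c_j² + K), where Shrink(u, ϑ) = sgn(u)·max(|u| − ϑ, 0). -/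
/-!
After rescaling by `ρ`, the objective restricted to the `j`-th coordinate is, up to an additive
constant, the scalar lasso objective `g t = a/2 t² − u t + θ |t|` with `a = c_j² + K`. Its minimiser
`x = Shrink(u, θ)/a` is characterised by the subgradient condition `u − a x ∈ θ ∂|·|(x)`, i.e.
`|u − a x| ≤ θ` and `(u − a x) x = θ |x|`, and this condition yields the quadratic growth
`g x + a/2 (t − x)² ≤ g t`, hence strict minimality.
-/

open Finset
open scoped RealInnerProductSpace

noncomputable section

def shrink (u ϑ : ℝ) : ℝ := Real.sign u * max (|u| - ϑ) 0

def scalarLassoObjective (a u θ t : ℝ) : ℝ := a / 2 * t ^ 2 - u * t + θ * |t|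

theorem abs_sub_shrink_le {θ : ℝ} (hθ : 0 ≤ θ) (u : ℝ) : |u - shrink u θ| ≤ θ := by
  unfold shrink
  rcases le_or_gt |u| θ with h | h
  · rwa [max_eq_right (by linarith), mul_zero, sub_zero]
  · rw [max_eq_left (by linarith)]
    rcases lt_trichotomy u 0 with hu | rfl | hu
    · rw [Real.sign_of_neg hu, abs_of_neg hu]
      rw [abs_of_neg hu] at h
      rw [abs_of_nonpos (by linarith)]
      linarith
    · simpa using hθ
    · rw [Real.sign_of_pos hu, abs_of_pos hu]
      rw [abs_of_pos hu] at h
      rw [abs_of_nonneg (by linarith)]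
      linarith

theorem sub_shrink_mul_shrink (u θ : ℝ) :
    (u - shrink u θ) * shrink u θ = θ * |shrink u θ| := by
  unfold shrink
  rcases le_or_gt |u| θ with h | h
  · simp [max_eq_right (sub_nonpos.mpr h)]
  · rw [max_eq_left (by linarith), abs_mul, abs_of_pos (by linarith : 0 < |u| - θ)]
    rcases lt_trichotomy u 0 with hu | rfl | hu
    · rw [Real.sign_of_neg hu, abs_of_neg hu, abs_neg, abs_one]
      ring
    · simp
    · rw [Real.sign_of_pos hu, abs_of_pos hu, abs_one]
      ring

theorem scalarLassoObjective_add_sq_le {a u θ x : ℝ} (hle : |u - a * x| ≤ θ)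
    (hcompl : (u - a * x) * x = θ * |x|) (t : ℝ) :
    scalarLassoObjective a u θ x + a / 2 * (t - x) ^ 2 ≤ scalarLassoObjective a u θ t := by
  have hlin : (u - a * x) * t ≤ θ * |t| :=
    calc (u - a * x) * t ≤ |u - a * x| * |t| := by rw [← abs_mul]; exact le_abs_self _
      _ ≤ θ * |t| := mul_le_mul_of_nonneg_right hle (abs_nonneg t)
  unfold scalarLassoObjective
  nlinarith

theorem scalarLassoObjective_shrink_div_lt {a θ : ℝ} (ha : 0 < a) (hθ : 0 ≤ θ) {u t : ℝ}
    (ht : t ≠ shrink u θ / a) :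
    scalarLassoObjective a u θ (shrink u θ / a) < scalarLassoObjective a u θ t := by
  have hax : u - a * (shrink u θ / a) = u - shrink u θ := by field_simp
  have hcompl : (u - a * (shrink u θ / a)) * (shrink u θ / a) = θ * |shrink u θ / a| := by
    rw [hax, abs_div, abs_of_pos ha, ← mul_div_assoc, sub_shrink_mul_shrink, mul_div_assoc]
  have hgrowth := scalarLassoObjective_add_sq_le (hax ▸ abs_sub_shrink_le hθ u) hcompl t
  have hsq : 0 < a / 2 * (t - shrink u θ / a) ^ 2 := by
    have := sub_ne_zero.mpr ht
    positivity
  linarith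

theorem Fintype.sum_apply_update {ι α M : Type*} [Fintype ι] [DecidableEq ι] [AddCommMonoid M]
    (f : ι → α → M) (x : ι → α) (j : ι) (t : α) :
    ∑ i, f i (Function.update x j t i) = f j t + ∑ i ∈ univ.erase j, f i (x i) := by
  rw [← add_sum_erase _ _ (mem_univ j), Function.update_self]
  congr 1
  refine Finset.sum_congr rfl fun i hi => ?_
  rw [Function.update_of_ne (ne_of_mem_erase hi)]

section EuclideanSpace

variable {ι : Type*} [Fintype ι] [DecidableEq ι]

theorem EuclideanSpace.inner_sub_toLp_update (g v : EuclideanSpace ℝ ι) (x : ι → ℝ) (j : ι)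
    (t : ℝ) :
    ⟪g, v - WithLp.toLp 2 (Function.update x j t)⟫ =
      g j * (v j - t) + ∑ i ∈ univ.erase j, g i * (v i - x i) := by
  simp only [PiLp.inner_apply, RCLike.inner_apply', conj_trivial, PiLp.sub_apply]
  exact Fintype.sum_apply_update (fun i s => g i * (v i - s)) x j t

theorem EuclideanSpace.norm_sub_toLp_update_sq (v : EuclideanSpace ℝ ι) (x : ι → ℝ) (j : ι)
    (t : ℝ) :
    ‖v - WithLp.toLp 2 (Function.update x j t)‖ ^ 2 =
      (v j - t) ^ 2 + ∑ i ∈ univ.erase j, (v i - x i) ^ 2 := by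
  simp only [EuclideanSpace.real_norm_sq_eq, PiLp.sub_apply]
  exact Fintype.sum_apply_update (fun i s => (v i - s) ^ 2) x j t

end EuclideanSpace

theorem dscdmm_objective_update_eq {d K : ℕ} {ρ lam μ : ℝ} (hρ : ρ ≠ 0)
    {C ω : EuclideanSpace ℝ (Fin d)} {γ ζv : Fin K → EuclideanSpace ℝ (Fin d)}
    {F : EuclideanSpace ℝ (Fin d) → ℝ}
    (hF : ∀ x : EuclideanSpace ℝ (Fin d),
      F x = lam * ∑ j, ω j * |x j|
        + (∑ k, ⟪γ k, ζv k - x⟫) + (ρ / 2) * ∑ k, ‖ζv k - x‖ ^ 2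
        + μ * ∑ j, C j * x j + (ρ / 2) * (∑ j, C j * x j) ^ 2)
    (j : Fin d) (ζ : EuclideanSpace ℝ (Fin d)) (t : ℝ) :
    F (WithLp.toLp 2 (Function.update ζ j t)) =
      ρ * scalarLassoObjective ((C j) ^ 2 + K)
          ((1 / ρ) * ∑ k, γ k j + ∑ k, ζv k j - (1 / ρ) * μ * C j
            - C j * ∑ m ∈ univ.erase j, C m * ζ m)
          (lam * ω j / ρ) t
        + F (WithLp.toLp 2 (Function.update ζ j 0)) := by
  simp only [hF, EuclideanSpace.inner_sub_toLp_update, EuclideanSpace.norm_sub_toLp_update_sq]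
  rw [Fintype.sum_apply_update (fun m s => ω m * |s|),
    Fintype.sum_apply_update (fun m s => ω m * |s|),
    Fintype.sum_apply_update (fun m s => C m * s), Fintype.sum_apply_update (fun m s => C m * s)]
  simp only [scalarLassoObjective, sub_sq, mul_sub, sum_add_distrib, sum_sub_distrib,
    ← sum_mul, ← mul_sum, sum_const, card_univ, Fintype.card_fin, nsmul_eq_mul]
  field_simp
  ring

theorem dscdmm_coordinate_update_general
    (d K : ℕ) (hK : 1 ≤ K)
    (ρ lam μ : ℝ) (hρ : 0 < ρ) (hlam : 0 ≤ lam)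
    (C ω : EuclideanSpace ℝ (Fin d)) (hω : ∀ j, 0 ≤ ω j)
    (γ ζv : Fin K → EuclideanSpace ℝ (Fin d))
    (F : EuclideanSpace ℝ (Fin d) → ℝ)
    (hF : ∀ x : EuclideanSpace ℝ (Fin d),
      F x = lam * ∑ j, ω j * |x j|
        + (∑ k, ⟪γ k, ζv k - x⟫) + (ρ / 2) * ∑ k, ‖ζv k - x‖ ^ 2
        + μ * ∑ j, C j * x j + (ρ / 2) * (∑ j, C j * x j) ^ 2)
    (j : Fin d) (ζ : EuclideanSpace ℝ (Fin d))
    (that : ℝ)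
    (hthat : that =
      shrink ((1 / ρ) * ∑ k, γ k j + ∑ k, ζv k j - (1 / ρ) * μ * C j
          - C j * ∑ m ∈ Finset.univ.erase j, C m * ζ m)
        (lam * ω j / ρ) / ((C j) ^ 2 + K)) :
    (∀ t, F (WithLp.toLp 2 (Function.update ζ j that)) ≤ F (WithLp.toLp 2 (Function.update ζ j t))) ∧
    (∀ t, F (WithLp.toLp 2 (Function.update ζ j t)) = F (WithLp.toLp 2 (Function.update ζ j that)) → t = that) := by
  have ha : 0 < (C j) ^ 2 + K := by
    have : (1 : ℝ) ≤ K := by exact_mod_cast hK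
    positivity
  have hθ : 0 ≤ lam * ω j / ρ := div_nonneg (mul_nonneg hlam (hω j)) hρ.le
  have hlt : ∀ t ≠ that,
      F (WithLp.toLp 2 (Function.update ζ j that)) < F (WithLp.toLp 2 (Function.update ζ j t)) := by
    intro t ht
    rw [dscdmm_objective_update_eq hρ.ne' hF j ζ t, dscdmm_objective_update_eq hρ.ne' hF j ζ that]
    subst hthat
    gcongr
    exact scalarLassoObjective_shrink_div_lt ha hθ ht
  refine ⟨fun t => ?_, fun t heq => ?_⟩
  · rcases eq_or_ne t that with rfl | ht
    · exact le_rfl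
    · exact (hlt t ht).le
  · by_contra ht
    exact (hlt t ht).ne' heq

/-- the coordinate-descent update (scd1) of the DSCDMM algorithm.
For each coordinate `j`, the one-variable function `t ↦ F(ζ with j-th coordinate
replaced by t)` attains its global minimum at the unique point given by the
soft-thresholding formula. -/
theorem dscdmm_coordinate_update
    (d K : ℕ) (hd : 1 ≤ d) (hK : 1 ≤ K)
    (ρ lam μ : ℝ) (hρ : 0 < ρ) (hlam : 0 ≤ lam)
    (C ω : EuclideanSpace ℝ (Fin d)) (hω : ∀ j, 0 ≤ ω j)
    (γ ζv : Fin K → EuclideanSpace ℝ (Fin d))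
    (F : EuclideanSpace ℝ (Fin d) → ℝ)
    (hF : ∀ x : EuclideanSpace ℝ (Fin d),
      F x = lam * ∑ j, ω j * |x j|
        + (∑ k, ⟪γ k, ζv k - x⟫) + (ρ / 2) * ∑ k, ‖ζv k - x‖ ^ 2
        + μ * ∑ j, C j * x j + (ρ / 2) * (∑ j, C j * x j) ^ 2)
    (j : Fin d) (ζ : EuclideanSpace ℝ (Fin d))
    (that : ℝ)
    (hthat : that =
      shrink ((1 / ρ) * ∑ k, γ k j + ∑ k, ζv k j - (1 / ρ) * μ * C j
          - C j * ∑ m ∈ Finset.univ.erase j, C m * ζ m)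
        (lam * ω j / ρ) / ((C j) ^ 2 + K)) :
    (∀ t, F (WithLp.toLp 2 (Function.update ζ j that)) ≤ F (WithLp.toLp 2 (Function.update ζ j t))) ∧
    (∀ t, F (WithLp.toLp 2 (Function.update ζ j t)) = F (WithLp.toLp 2 (Function.update ζ j that)) → t = that) :=
  dscdmm_coordinate_update_general d K hK ρ lam μ hρ hlam C ω hω γ ζv F hF j ζ that hthat
end
end

section
/- (Lemma 1, upper bound.) Under the stated hypotheses, the optimality gap satisfies Σ_{k=1}^K ( Q_k(ζ_k^{l+1}) − Q_k(ζ★) ) ≤ − Σ_{k=1}^K μ_k^{l+1} g_k^{l+1} − Σ_{k=1}^{K−1} ⟨γ_k^{l+1}, r_k^{l+1}⟩ + Σ_{k∈N_h} ⟨s_k^{l+1}, ζ★ − ζ_k^{l+1}⟩. -/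
open Finset
open scoped RealInnerProductSpace

/-!
Testing the optimality of each local minimizer `ζ_k` against the feasible point `ζ★` gives
`Q_k(ζ_k) - Q_k(ζ★) ≤ ⟪v_k, ζ★ - ζ_k⟫` for the linear coefficient `v_k` of machine `k`.
Summing over `k`, the `μ_k C` terms give `-μ_k g_k` because `C⊤ζ★ = 0`, and the consensus terms
`γ_k - γ_{k-1}` telescope (summation by parts, using `γ_0 = γ_K = 0`) into `-Σ ⟪γ_k, r_k⟫`.
-/

section
variable {E : Type*} [NormedAddCommGroup E] [InnerProductSpace ℝ E]

lemma sub_le_inner_sub_of_add_inner_le {f : E → ℝ} {v x z : E}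
    (h : f x + ⟪v, x⟫ ≤ f z + ⟪v, z⟫) : f x - f z ≤ ⟪v, z - x⟫ := by
  rw [inner_sub_right]
  linarith

lemma sum_Icc_inner_sub_pred_add (g w : ℕ → E) (hg : g 0 = 0) (m : ℕ) :
    ∑ k ∈ Icc 1 (m + 1), ⟪g k - g (k - 1), w k⟫
      = ∑ k ∈ Icc 1 m, ⟪g k, w k - w (k + 1)⟫ + ⟪g (m + 1), w (m + 1)⟫ := by
  induction m with
  | zero => simp [hg]
  | succ m ih =>
    rw [sum_Icc_succ_top (by omega), ih, sum_Icc_succ_top (by omega), Nat.add_sub_cancel,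
      inner_sub_left, inner_sub_right]
    ring

lemma sum_Icc_inner_sub_pred (g w : ℕ → E) (K : ℕ) (h0 : g 0 = 0) (hK : g K = 0) :
    ∑ k ∈ Icc 1 K, ⟪g k - g (k - 1), w k⟫ = ∑ k ∈ Icc 1 (K - 1), ⟪g k, w k - w (k + 1)⟫ := by
  rcases K with _ | m
  · simp
  · rw [sum_Icc_inner_sub_pred_add g w h0, hK, inner_zero_left, add_zero, Nat.add_sub_cancel]

end

theorem lemma1_upper_bound_general
    (d K : ℕ)
    (C : EuclideanSpace ℝ (Fin d))
    (Q : ℕ → EuclideanSpace ℝ (Fin d) → ℝ)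
    (ζs : EuclideanSpace ℝ (Fin d)) (hCζs : ⟪C, ζs⟫ = 0)
    (μ1 : ℕ → ℝ) (γ1 : ℕ → EuclideanSpace ℝ (Fin d))
    (hγ0 : γ1 0 = 0) (hγK : γ1 K = 0)
    (s : ℕ → EuclideanSpace ℝ (Fin d))
    (ζ1 : ℕ → EuclideanSpace ℝ (Fin d))
    (hhead : ∀ k ∈ Icc 1 K, Odd k → ∀ z : EuclideanSpace ℝ (Fin d),
      Q k (ζ1 k) + ⟪μ1 k • C - γ1 (k-1) + γ1 k + s k, ζ1 k⟫
        ≤ Q k z + ⟪μ1 k • C - γ1 (k-1) + γ1 k + s k, z⟫)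
    (htail : ∀ k ∈ Icc 1 K, Even k → ∀ z : EuclideanSpace ℝ (Fin d),
      Q k (ζ1 k) + ⟪μ1 k • C - γ1 (k-1) + γ1 k, ζ1 k⟫
        ≤ Q k z + ⟪μ1 k • C - γ1 (k-1) + γ1 k, z⟫) :
    ∑ k ∈ Icc 1 K, (Q k (ζ1 k) - Q k ζs)
      ≤ - (∑ k ∈ Icc 1 K, μ1 k * ⟪C, ζ1 k⟫)
        - (∑ k ∈ Icc 1 (K-1), ⟪γ1 k, ζ1 k - ζ1 (k+1)⟫)
        + ∑ k ∈ (Icc 1 K).filter (fun k => Odd k), ⟪s k, ζs - ζ1 k⟫ := by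
  have hlocal : ∀ k ∈ Icc 1 K, Q k (ζ1 k) - Q k ζs
      ≤ ⟪μ1 k • C - γ1 (k - 1) + γ1 k + (if Odd k then s k else 0), ζs - ζ1 k⟫ := by
    intro k hk
    apply sub_le_inner_sub_of_add_inner_le
    rcases Nat.even_or_odd k with he | ho
    · simpa only [Nat.not_odd_iff_even.mpr he, if_false, add_zero] using htail k hk he ζs
    · simpa only [ho, if_true] using hhead k hk ho ζs
  have hexpand : ∀ k, ⟪μ1 k • C - γ1 (k - 1) + γ1 k + (if Odd k then s k else 0), ζs - ζ1 k⟫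
      = -(μ1 k * ⟪C, ζ1 k⟫) + ⟪γ1 k - γ1 (k - 1), ζs - ζ1 k⟫
        + if Odd k then ⟪s k, ζs - ζ1 k⟫ else 0 := by
    intro k
    rw [sub_add_eq_add_sub, add_sub_assoc, inner_add_left, inner_add_left, real_inner_smul_left,
      inner_sub_right C, hCζs, apply_ite (⟪·, ζs - ζ1 k⟫), inner_zero_left]
    ring
  have hshift : ∀ k, ⟪γ1 k, (ζs - ζ1 k) - (ζs - ζ1 (k + 1))⟫ = -⟪γ1 k, ζ1 k - ζ1 (k + 1)⟫ := by
    intro k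
    rw [sub_sub_sub_cancel_left, ← neg_sub, inner_neg_right]
  calc ∑ k ∈ Icc 1 K, (Q k (ζ1 k) - Q k ζs)
      ≤ ∑ k ∈ Icc 1 K, ⟪μ1 k • C - γ1 (k - 1) + γ1 k + (if Odd k then s k else 0), ζs - ζ1 k⟫ :=
        sum_le_sum hlocal
    _ = _ := by
      rw [sum_congr rfl fun k _ => hexpand k, sum_add_distrib, sum_add_distrib, sum_neg_distrib,
        sum_Icc_inner_sub_pred γ1 (fun k => ζs - ζ1 k) K hγ0 hγK, sum_congr rfl fun k _ => hshift k,
        sum_neg_distrib, sum_filter]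
      ring

/-- Lemma 1, upper bound: the optimality-gap upper bound of the
DSGCDMM iterates, where head machines (odd `k`) minimize the linearized
objective with the dual-residual term `s_k` and tail machines (even `k`)
minimize it without `s_k`. -/
theorem lemma1_upper_bound
    (d K : ℕ) (hd : 1 ≤ d) (hK : 2 ≤ K) (hKeven : Even K)
    (n : ℕ → ℕ) (hn : ∀ k ∈ Icc 1 K, 1 ≤ n k)
    (y : ∀ k, EuclideanSpace ℝ (Fin (n k)))
    (P : ∀ k, Matrix (Fin (n k)) (Fin d) ℝ)
    (lam : ℝ) (hlam : 0 ≤ lam)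
    (ω : ℕ → Fin d → ℝ) (hω : ∀ k ∈ Icc 1 K, ∀ j, 0 ≤ ω k j)
    (C : EuclideanSpace ℝ (Fin d))
    (Q : ℕ → EuclideanSpace ℝ (Fin d) → ℝ)
    (hQ : ∀ k, ∀ x : EuclideanSpace ℝ (Fin d), Q k x =
      (1 / (2 * (n k : ℝ))) * ‖y k - (P k).toEuclideanLin x‖ ^ 2
        + lam * ∑ j, ω k j * |x j|)
    (ζs : EuclideanSpace ℝ (Fin d)) (hCζs : ⟪C, ζs⟫ = 0)
    (hmin : ∀ z : EuclideanSpace ℝ (Fin d), ⟪C, z⟫ = 0 →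
      ∑ k ∈ Icc 1 K, Q k ζs ≤ ∑ k ∈ Icc 1 K, Q k z)
    (μ1 : ℕ → ℝ) (γ1 : ℕ → EuclideanSpace ℝ (Fin d))
    (hγ0 : γ1 0 = 0) (hγK : γ1 K = 0)
    (s : ℕ → EuclideanSpace ℝ (Fin d))
    (ζ1 : ℕ → EuclideanSpace ℝ (Fin d))
    (hhead : ∀ k ∈ Icc 1 K, Odd k → ∀ z : EuclideanSpace ℝ (Fin d),
      Q k (ζ1 k) + ⟪μ1 k • C - γ1 (k-1) + γ1 k + s k, ζ1 k⟫
        ≤ Q k z + ⟪μ1 k • C - γ1 (k-1) + γ1 k + s k, z⟫)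
    (htail : ∀ k ∈ Icc 1 K, Even k → ∀ z : EuclideanSpace ℝ (Fin d),
      Q k (ζ1 k) + ⟪μ1 k • C - γ1 (k-1) + γ1 k, ζ1 k⟫
        ≤ Q k z + ⟪μ1 k • C - γ1 (k-1) + γ1 k, z⟫) :
    ∑ k ∈ Icc 1 K, (Q k (ζ1 k) - Q k ζs)
      ≤ - (∑ k ∈ Icc 1 K, μ1 k * ⟪C, ζ1 k⟫)
        - (∑ k ∈ Icc 1 (K-1), ⟪γ1 k, ζ1 k - ζ1 (k+1)⟫)
        + ∑ k ∈ (Icc 1 K).filter (fun k => Odd k), ⟪s k, ζs - ζ1 k⟫ :=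
  lemma1_upper_bound_general d K C Q ζs hCζs μ1 γ1 hγ0 hγK s ζ1 hhead htail
end

section
/- (Theorem 1, part 2.) Under the DSGCDMM dynamics and the existence of a saddle point, the primal residual of the consensus constraint converges to zero: for every k = 1,…,K−1, r_k^l = ζ_k^l − ζ_{k+1}^l → 0 in ℝ^d as l → ∞. -/
/-!
DSGCDMM is two-block ADMM in disguise. Stack the constraints `C⊤ζ_k = 0` (`k ≤ K`) and
`ζ_k = ζ_{k+1}` (`k < K`) into one linear map into a Euclidean space of constraint rows, whose
multiplier is `y = (μ, γ)`. Because the chain alternates between odd and even machines and `K` is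
even, every row is a part involving only odd machines plus a part involving only even machines, and
the augmented Lagrangian is, up to terms that do not involve the odd (resp. even) machines, the sum
of the subproblems (i)–(ii) of the odd machines (resp. (iii)–(iv) of the even machines). So one
sweep of DSGCDMM is one ADMM step: minimize over the odd block, then over the even block, then
ascend in `y`.

For ADMM the Lyapunov argument of Boyd et al. applies: the optimality conditions of the two block
minimizations, the monotonicity of the even block's optimality condition between two consecutive
steps, and the saddle point give `V_{l+1} + ρ²‖r_{l+1}‖² ≤ V_l` for
`V_l = ‖y_l - y⋆‖² + ρ²‖B (z_l - z⋆)‖²`. Hence `∑ ‖r_l‖² < ∞`, and the residual `r_l`, one of whose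
rows is `ζ_k^l - ζ_{k+1}^l`, tends to `0`.
-/

open Finset Filter
open scoped RealInnerProductSpace Topology

noncomputable section

theorem convexOn_univ_sum {X ι : Type*} [AddCommGroup X] [Module ℝ X] (s : Finset ι)
    {F : ι → X → ℝ} (hF : ∀ i ∈ s, ConvexOn ℝ Set.univ (F i)) :
    ConvexOn ℝ Set.univ fun x => ∑ i ∈ s, F i x := by
  refine ⟨convex_univ, fun x _ y _ a b ha hb hab => ?_⟩
  simp only [smul_eq_mul, mul_sum, ← sum_add_distrib]
  exact sum_le_sum fun i hi => (hF i hi).2 trivial trivial ha hb hab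

theorem convexOn_univ_sq_norm_sub {E F : Type*} [NormedAddCommGroup E] [NormedSpace ℝ E]
    [NormedAddCommGroup F] [NormedSpace ℝ F] (y : F) (L : E →ₗ[ℝ] F) :
    ConvexOn ℝ Set.univ fun x => ‖y - L x‖ ^ 2 :=
  ((convexOn_norm convex_univ).comp_affineMap (AffineMap.const ℝ E y - L.toAffineMap)).pow
    (fun _ _ => norm_nonneg _) 2

theorem convexOn_univ_lasso {ι κ : Type*} [Fintype ι] [Fintype κ] [DecidableEq κ]
    (y : EuclideanSpace ℝ ι) (P : Matrix ι κ ℝ) {c lam : ℝ} (hc : 0 ≤ c) (hlam : 0 ≤ lam)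
    {ω : κ → ℝ} (hω : ∀ j, 0 ≤ ω j) :
    ConvexOn ℝ Set.univ fun x : EuclideanSpace ℝ κ =>
      c * ‖y - P.toEuclideanLin x‖ ^ 2 + lam * ∑ j, ω j * |x j| := by
  refine ((convexOn_univ_sq_norm_sub y _).smul hc).add (.smul hlam ?_)
  refine convexOn_univ_sum _ fun j _ => .smul (hω j) ?_
  simpa [Function.comp_def] using
    (convexOn_norm (convex_univ (𝕜 := ℝ) (E := ℝ))).comp_linearMap
      (EuclideanSpace.proj (𝕜 := ℝ) j).toLinearMap

theorem nonpos_of_forall_mul_le_sq_mul {a b : ℝ}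
    (h : ∀ t : ℝ, 0 < t → t ≤ 1 → t * a ≤ t ^ 2 * b) : a ≤ 0 := by
  have hlim := tendsto_one_div_add_atTop_nhds_zero_nat.mul_const b
  rw [zero_mul] at hlim
  refine ge_of_tendsto' hlim fun n => ?_
  have ht : (0 : ℝ) < 1 / (n + 1) := by positivity
  have := h _ ht (by rw [div_le_one (by positivity)]; linarith [n.cast_nonneg (α := ℝ)])
  rw [sq, mul_assoc] at this
  exact le_of_mul_le_mul_left this ht

theorem tendsto_zero_of_add_le_of_nonneg {V a : ℕ → ℝ} (hV : ∀ l, 0 ≤ V l) (ha : ∀ l, 0 ≤ a l)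
    (h : ∀ l, V (l + 1) + a l ≤ V l) : Tendsto a atTop (𝓝 0) := by
  have hsum : ∀ N, ∑ l ∈ range N, a l + V N ≤ V 0 := fun N => by
    induction N with
    | zero => simp
    | succ N ih => rw [sum_range_succ]; linarith [h N]
  exact (summable_of_sum_range_le ha fun N => by linarith [hsum N, hV N]).tendsto_atTop_zero

section ADMM

variable {X Z W : Type*} [AddCommGroup X] [Module ℝ X] [AddCommGroup Z] [Module ℝ Z]
  [NormedAddCommGroup W] [InnerProductSpace ℝ W]

theorem ConvexOn.add_inner_le_of_forall_add_quadratic_le {F : X → ℝ}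
    (hF : ConvexOn ℝ Set.univ F) (A : X →ₗ[ℝ] W) (e y : W) (ρ : ℝ) {x : X}
    (hmin : ∀ u, F x + (⟪y, A x + e⟫ + ρ / 2 * ‖A x + e‖ ^ 2)
      ≤ F u + (⟪y, A u + e⟫ + ρ / 2 * ‖A u + e‖ ^ 2)) (u : X) :
    F x + ⟪y + ρ • (A x + e), A x - A u⟫ ≤ F u := by
  set D := A u - A x
  suffices F x - F u + ⟪y + ρ • (A x + e), A x - A u⟫ ≤ 0 by linarith
  -- compare `x` with `x + t • (u - x)` and let `t → 0`
  refine nonpos_of_forall_mul_le_sq_mul (b := ρ / 2 * ‖D‖ ^ 2) fun t ht ht1 => ?_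
  have hseg : x + t • (u - x) = (1 - t) • x + t • u := by module
  have hconv : F (x + t • (u - x)) ≤ (1 - t) * F x + t * F u := by
    simpa [hseg] using
      hF.2 (Set.mem_univ x) (Set.mem_univ u) (by linarith : 0 ≤ 1 - t) ht.le (by ring)
  have hA : A (x + t • (u - x)) + e = (A x + e) + t • D := by
    simp only [map_add, map_smul, map_sub, D]; abel
  have hlin : ⟪y, A x + e + t • D⟫ = ⟪y, A x + e⟫ + t * ⟪y, D⟫ := by
    rw [inner_add_right, real_inner_smul_right]
  have hquad : ‖A x + e + t • D‖ ^ 2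
      = ‖A x + e‖ ^ 2 + 2 * t * ⟪A x + e, D⟫ + t ^ 2 * ‖D‖ ^ 2 := by
    rw [norm_add_sq_real, real_inner_smul_right, norm_smul, Real.norm_eq_abs, mul_pow, sq_abs]
    ring
  have hm := hmin (x + t • (u - x))
  rw [hA, hlin, hquad] at hm
  have hD : A x - A u = -D := by simp [D]
  rw [hD, inner_neg_right, inner_add_left, real_inner_smul_left]
  nlinarith

variable (f : X → ℝ) (g : Z → ℝ) (A : X →ₗ[ℝ] W) (B : Z →ₗ[ℝ] W) (c : W) (ρ : ℝ)

def augLagrangian (x : X) (z : Z) (y : W) : ℝ :=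
  f x + g z + ⟪y, A x + B z - c⟫ + ρ / 2 * ‖A x + B z - c‖ ^ 2

variable {f g A B c ρ}

theorem augLagrangian_optimality_left (hf : ConvexOn ℝ Set.univ f) {x : X} {z : Z} {y : W}
    (hmin : ∀ u, augLagrangian f g A B c ρ x z y ≤ augLagrangian f g A B c ρ u z y) (u : X) :
    f x + ⟪y + ρ • (A x + B z - c), A x - A u⟫ ≤ f u := by
  have h := hf.add_inner_le_of_forall_add_quadratic_le A (B z - c) y ρ (x := x) (fun u => by
    have := hmin u
    simp only [augLagrangian, add_sub_assoc] at this
    linarith) u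
  rwa [← add_sub_assoc] at h

theorem augLagrangian_optimality_right (hg : ConvexOn ℝ Set.univ g) {x : X} {z : Z} {y : W}
    (hmin : ∀ v, augLagrangian f g A B c ρ x z y ≤ augLagrangian f g A B c ρ x v y) (v : Z) :
    g z + ⟪y + ρ • (A x + B z - c), B z - B v⟫ ≤ g v := by
  have h := hg.add_inner_le_of_forall_add_quadratic_le B (A x - c) y ρ (x := z) (fun v => by
    have := hmin v
    simp only [augLagrangian, add_sub_right_comm _ (B _), add_comm (A x - c)] at this
    linarith) v
  rwa [add_comm (B z), sub_add_eq_add_sub] at h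

theorem admm_lyapunov_step (hρ : 0 < ρ) {x' xs : X} {z z' zs : Z} {y y' ys : W}
    (hx : f x' + ⟪y' + ρ • (B z - B z'), A x' - A xs⟫ ≤ f xs)
    (hz : g z' + ⟪y', B z' - B zs⟫ ≤ g zs)
    (hz' : g z' + ⟪y', B z' - B z⟫ ≤ g z)
    (hz₀ : g z + ⟪y, B z - B z'⟫ ≤ g z')
    (hy : y' = y + ρ • (A x' + B z' - c))
    (hs : A xs + B zs = c)
    (hsaddle : f xs + g zs ≤ f x' + g z' + ⟪ys, A x' + B z' - c⟫) :
    ‖y' - ys‖ ^ 2 + ρ ^ 2 * ‖B z' - B zs‖ ^ 2 + ρ ^ 2 * ‖A x' + B z' - c‖ ^ 2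
      ≤ ‖y - ys‖ ^ 2 + ρ ^ 2 * ‖B z - B zs‖ ^ 2 := by
  set r := A x' + B z' - c
  have hAx : A x' - A xs = r - (B z' - B zs) := by simp only [r, ← hs]; abel
  have hmono : ⟪B z' - B z, r⟫ ≤ 0 := by
    have : ⟪y' - y, B z' - B z⟫ ≤ 0 := by
      simp only [inner_sub_left, inner_sub_right] at hz' hz₀ ⊢; linarith
    rw [hy, add_sub_cancel_left, real_inner_smul_left, real_inner_comm] at this
    exact nonpos_of_mul_nonpos_right this hρ
  have hkey : ⟪y' - ys, r⟫ + ρ * ⟪B z' - B z, B z' - B zs⟫ ≤ 0 := by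
    have hsum : ⟪y' + ρ • (B z - B z'), A x' - A xs⟫ + ⟪y', B z' - B zs⟫ - ⟪ys, r⟫ ≤ 0 := by
      linarith
    rw [hAx] at hsum
    simp only [inner_add_left, inner_sub_left, inner_sub_right, real_inner_smul_left,
      real_inner_smul_right, real_inner_comm] at hsum hmono ⊢
    nlinarith
  have hy_sq : ‖y - ys‖ ^ 2 = ‖y' - ys‖ ^ 2 - 2 * ρ * ⟪y' - ys, r⟫ + ρ ^ 2 * ‖r‖ ^ 2 := by
    rw [show y - ys = (y' - ys) - ρ • r by rw [hy]; abel, norm_sub_sq_real,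
      real_inner_smul_right, norm_smul, Real.norm_eq_abs, mul_pow, sq_abs]
    ring
  have hb_sq : ‖B z - B zs‖ ^ 2
      = ‖B z' - B zs‖ ^ 2 - 2 * ⟪B z' - B z, B z' - B zs⟫ + ‖B z' - B z‖ ^ 2 := by
    rw [show B z - B zs = (B z' - B zs) - (B z' - B z) by abel, norm_sub_sq_real,
      real_inner_comm]
  nlinarith [mul_nonpos_of_nonneg_of_nonpos (by positivity : (0:ℝ) ≤ 2 * ρ) hkey,
    sq_nonneg ρ, mul_nonneg (sq_nonneg ρ) (sq_nonneg ‖B z' - B z‖)]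

theorem admm_residual_tendsto_zero (hf : ConvexOn ℝ Set.univ f) (hg : ConvexOn ℝ Set.univ g)
    (hρ : 0 < ρ) {x : ℕ → X} {z : ℕ → Z} {y : ℕ → W}
    (hx : ∀ l u, augLagrangian f g A B c ρ (x (l + 1)) (z l) (y l)
      ≤ augLagrangian f g A B c ρ u (z l) (y l))
    (hz : ∀ l v, augLagrangian f g A B c ρ (x (l + 1)) (z (l + 1)) (y l)
      ≤ augLagrangian f g A B c ρ (x (l + 1)) v (y l))
    (hy : ∀ l, y (l + 1) = y l + ρ • (A (x (l + 1)) + B (z (l + 1)) - c))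
    {xs : X} {zs : Z} {ys : W} (hs : A xs + B zs = c)
    (hsaddle : ∀ u v, f xs + g zs ≤ f u + g v + ⟪ys, A u + B v - c⟫) :
    Tendsto (fun l => A (x l) + B (z l) - c) atTop (𝓝 0) := by
  have hxopt : ∀ l u, f (x (l + 2)) + ⟪y (l + 2) + ρ • (B (z (l + 1)) - B (z (l + 2))),
      A (x (l + 2)) - A u⟫ ≤ f u := fun l u => by
    have h := augLagrangian_optimality_left hf (hx (l + 1)) u
    have hdual : y (l + 1) + ρ • (A (x (l + 2)) + B (z (l + 1)) - c)
        = y (l + 2) + ρ • (B (z (l + 1)) - B (z (l + 2))) := by rw [hy (l + 1)]; module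
    rwa [hdual] at h
  have hzopt : ∀ l v, g (z (l + 1)) + ⟪y (l + 1), B (z (l + 1)) - B v⟫ ≤ g v := fun l v => by
    simpa only [← hy] using augLagrangian_optimality_right hg (hz l) v
  set V := fun l => ‖y (l + 1) - ys‖ ^ 2 + ρ ^ 2 * ‖B (z (l + 1)) - B zs‖ ^ 2
  have hstep : ∀ l, V (l + 1) + ρ ^ 2 * ‖A (x (l + 2)) + B (z (l + 2)) - c‖ ^ 2 ≤ V l :=
    fun l => admm_lyapunov_step hρ (hxopt l xs) (hzopt (l + 1) zs) (hzopt (l + 1) (z (l + 1)))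
      (hzopt l (z (l + 2))) (hy (l + 1)) hs (hsaddle _ _)
  have hsq := tendsto_zero_of_add_le_of_nonneg (fun l => by positivity) (fun l => by positivity)
    hstep
  have hnorm : Tendsto (fun l => ‖A (x (l + 2)) + B (z (l + 2)) - c‖) atTop (𝓝 0) := by
    have h := (hsq.div_const (ρ ^ 2)).sqrt
    simpa [mul_div_cancel_left₀ _ (pow_ne_zero 2 hρ.ne'), Real.sqrt_sq (norm_nonneg _)] using h
  exact (tendsto_add_atTop_iff_nat 2).mp (tendsto_zero_iff_norm_tendsto_zero.mpr hnorm)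

end ADMM

section Rows

variable {E : Type*} [NormedAddCommGroup E] [InnerProductSpace ℝ E] (K : ℕ)

abbrev Rows (K : ℕ) (E : Type*) [NormedAddCommGroup E] [InnerProductSpace ℝ E] :=
  WithLp 2 ((PiLp 2 fun _ : Icc 1 K => ℝ) × PiLp 2 fun _ : Icc 1 (K - 1) => E)

def toRows : (ℕ → ℝ) × (ℕ → E) →ₗ[ℝ] Rows K E where
  toFun p := WithLp.toLp 2 (WithLp.toLp 2 fun k => p.1 k, WithLp.toLp 2 fun k => p.2 k)
  map_add' _ _ := rfl
  map_smul' _ _ := rfl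

variable {K}

@[simp] theorem toRows_fst (p : (ℕ → ℝ) × (ℕ → E)) (k : Icc 1 K) :
    (toRows K p).ofLp.1.ofLp k = p.1 k := rfl

@[simp] theorem toRows_snd (p : (ℕ → ℝ) × (ℕ → E)) (k : Icc 1 (K - 1)) :
    (toRows K p).ofLp.2.ofLp k = p.2 k := rfl

theorem inner_toRows (p q : (ℕ → ℝ) × (ℕ → E)) :
    ⟪toRows K p, toRows K q⟫
      = ∑ k ∈ Icc 1 K, p.1 k * q.1 k + ∑ k ∈ Icc 1 (K - 1), ⟪p.2 k, q.2 k⟫ := by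
  simp only [WithLp.prod_inner_apply, PiLp.inner_apply, Real.inner_apply, toRows_fst, toRows_snd]
  rw [sum_coe_sort (Icc 1 K) (fun k => p.1 k * q.1 k),
    sum_coe_sort (Icc 1 (K - 1)) (fun k => ⟪p.2 k, q.2 k⟫)]

theorem toRows_congr {p q : (ℕ → ℝ) × (ℕ → E)} (h₁ : ∀ k ∈ Icc 1 K, p.1 k = q.1 k)
    (h₂ : ∀ k ∈ Icc 1 (K - 1), p.2 k = q.2 k) : toRows K p = toRows K q := by
  refine WithLp.ofLp_injective 2 (Prod.ext (PiLp.ext fun k => ?_) (PiLp.ext fun k => ?_))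
  exacts [h₁ k k.2, h₂ k k.2]

theorem norm_le_norm_toRows (p : (ℕ → ℝ) × (ℕ → E)) {k : ℕ} (hk : k ∈ Icc 1 (K - 1)) :
    ‖p.2 k‖ ≤ ‖toRows K p‖ :=
  (PiLp.norm_apply_le (toRows K p).snd ⟨k, hk⟩).trans (WithLp.norm_snd_le _ (toRows K p))

end Rows

section Regroup

variable {M : Type*} [AddCommMonoid M]

theorem sum_Icc_two_mul (m : ℕ) (h : ℕ → M) :
    ∑ k ∈ Icc 1 (2 * m), h k = ∑ i ∈ range m, (h (2 * i + 1) + h (2 * i + 2)) := by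
  induction m with
  | zero => simp
  | succ m ih =>
    rw [show 2 * (m + 1) = 2 * m + 1 + 1 by ring, sum_Icc_succ_top (by omega),
      sum_Icc_succ_top (by omega), ih, sum_range_succ, add_assoc]

theorem sum_Icc_two_mul_sub_one (m : ℕ) (h : ℕ → M) :
    ∑ k ∈ Icc 1 (2 * m - 1), h k
      = ∑ i ∈ range m, h (2 * i + 1) + ∑ i ∈ range (m - 1), h (2 * i + 2) := by
  cases m with
  | zero => simp
  | succ m =>
    rw [show 2 * (m + 1) - 1 = 2 * m + 1 by omega, sum_Icc_succ_top (by omega), sum_Icc_two_mul,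
      sum_add_distrib, sum_range_succ, Nat.add_sub_cancel]
    abel

theorem sum_range_ite_eq_zero (m : ℕ) (g : ℕ → M) :
    ∑ i ∈ range m, (if i = 0 then 0 else g i) = ∑ i ∈ range (m - 1), g (i + 1) := by
  cases m with
  | zero => simp
  | succ m => simp [sum_range_succ']

theorem sum_range_ite_add_one_eq (m : ℕ) (g : ℕ → M) :
    ∑ i ∈ range m, (if i + 1 = m then 0 else g i) = ∑ i ∈ range (m - 1), g i := by
  cases m with
  | zero => simp
  | succ m =>
    rw [sum_range_succ, if_pos rfl, add_zero, Nat.add_sub_cancel]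
    exact sum_congr rfl fun i hi => if_neg (by have := mem_range.1 hi; omega)

end Regroup

theorem Nat.not_odd_two_mul_add_two (n : ℕ) : ¬Odd (2 * n + 2) :=
  Nat.not_odd_iff_even.2 ⟨n + 1, by ring⟩

section DSGCDMM

variable {E : Type*} [NormedAddCommGroup E] [InnerProductSpace ℝ E]

def constraintMap (C : E) : (ℕ → E) →ₗ[ℝ] (ℕ → ℝ) × (ℕ → E) where
  toFun u := (fun k => ⟪C, u k⟫, fun k => u k - u (k + 1))
  map_add' u v := Prod.ext (funext fun k => inner_add_right _ _ _)
    (funext fun k => add_sub_add_comm _ _ _ _)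
  map_smul' a u := by ext k <;> simp [real_inner_smul_right, smul_sub]

def oddPart : (ℕ → E) →ₗ[ℝ] (ℕ → E) where
  toFun u k := if Odd k then u k else 0
  map_add' u v := by ext k; by_cases h : Odd k <;> simp [h]
  map_smul' a u := by ext k; by_cases h : Odd k <;> simp [h]

variable (Q : ℕ → E → ℝ) (C : E) (ρ : ℝ) (m : ℕ) (μ : ℕ → ℝ) (γ : ℕ → E)

/- Both ADMM blocks are whole families `ℕ → E`: the odd block is read only at odd indices and the
even block only at even ones, so the DSGCDMM iterate `ζ l` serves as both block iterates. -/

def oddObjective (u : ℕ → E) : ℝ := ∑ i ∈ range m, Q (2 * i + 1) (u (2 * i + 1))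

def evenObjective (v : ℕ → E) : ℝ := ∑ i ∈ range m, Q (2 * i + 2) (v (2 * i + 2))

def oddRows : (ℕ → E) →ₗ[ℝ] Rows (2 * m) E := toRows (2 * m) ∘ₗ constraintMap C ∘ₗ oddPart

def evenRows : (ℕ → E) →ₗ[ℝ] Rows (2 * m) E :=
  toRows (2 * m) ∘ₗ constraintMap C ∘ₗ (LinearMap.id - oddPart)

def nodeTerm (μ : ℝ) (a : E) : ℝ := μ * ⟪C, a⟫ + ρ / 2 * ⟪C, a⟫ ^ 2

def edgeTerm (γ a b : E) : ℝ := ⟪γ, a - b⟫ + ρ / 2 * ‖a - b‖ ^ 2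

/- The objectives of the subproblems of machine `2 * i + 1` in (i)–(ii) (no left neighbour for
`i = 0`) and of machine `2 * i + 2` in (iii)–(iv) (no right neighbour for `i + 1 = m`), given the
current values `v`, resp. `u`, of the other machines. -/

def oddLocalObjective (v : ℕ → E) (i : ℕ) (a : E) : ℝ :=
  Q (2 * i + 1) a + nodeTerm C ρ (μ (2 * i + 1)) a
    + (if i = 0 then 0 else edgeTerm ρ (γ (2 * i)) (v (2 * i)) a)
    + edgeTerm ρ (γ (2 * i + 1)) a (v (2 * i + 2))

def evenLocalObjective (u : ℕ → E) (i : ℕ) (a : E) : ℝ :=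
  Q (2 * i + 2) a + nodeTerm C ρ (μ (2 * i + 2)) a
    + edgeTerm ρ (γ (2 * i + 1)) (u (2 * i + 1)) a
    + (if i + 1 = m then 0 else edgeTerm ρ (γ (2 * i + 2)) a (u (2 * i + 3)))

variable {Q C ρ m μ γ}

theorem inner_add_sq_norm_toRows (K : ℕ) (w : ℕ → E) :
    ⟪toRows K (μ, γ), toRows K (constraintMap C w)⟫ + ρ / 2 * ‖toRows K (constraintMap C w)‖ ^ 2
      = ∑ k ∈ Icc 1 K, nodeTerm C ρ (μ k) (w k)
        + ∑ k ∈ Icc 1 (K - 1), edgeTerm ρ (γ k) (w k) (w (k + 1)) := by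
  rw [← real_inner_self_eq_norm_sq, inner_toRows, inner_toRows]
  simp only [constraintMap, LinearMap.coe_mk, AddHom.coe_mk, nodeTerm, edgeTerm,
    real_inner_self_eq_norm_sq, sum_add_distrib, ← mul_sum, ← sq]
  ring

theorem oddRows_add_evenRows (u v : ℕ → E) :
    oddRows C m u + evenRows C m v
      = toRows (2 * m) (constraintMap C fun k => if Odd k then u k else v k) := by
  simp only [oddRows, evenRows, LinearMap.comp_apply, ← map_add]
  congr 2
  ext k
  simp only [oddPart, Pi.add_apply, LinearMap.sub_apply, LinearMap.id_apply, LinearMap.coe_mk,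
    AddHom.coe_mk, Pi.sub_apply]
  split_ifs <;> simp

theorem oddRows_add_evenRows_self (u : ℕ → E) :
    oddRows C m u + evenRows C m u = toRows (2 * m) (constraintMap C u) := by
  simp [oddRows_add_evenRows]

theorem augLagrangian_eq_sum_oddLocalObjective (u v : ℕ → E) :
    augLagrangian (oddObjective Q m) (evenObjective Q m) (oddRows C m) (evenRows C m) 0 ρ u v
        (toRows (2 * m) (μ, γ))
      = ∑ i ∈ range m, oddLocalObjective Q C ρ μ γ v i (u (2 * i + 1))
        + ∑ i ∈ range m, (Q (2 * i + 2) (v (2 * i + 2))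
          + nodeTerm C ρ (μ (2 * i + 2)) (v (2 * i + 2))) := by
  rw [augLagrangian, sub_zero, add_assoc, oddRows_add_evenRows, inner_add_sq_norm_toRows,
    sum_Icc_two_mul, sum_Icc_two_mul_sub_one]
  simp only [oddLocalObjective, oddObjective, evenObjective, sum_add_distrib,
    sum_range_ite_eq_zero, odd_two_mul_add_one, Nat.odd_add_one, if_true, if_false, not_true,
    not_false_eq_true, mul_add, mul_one, add_assoc, Nat.reduceAdd]
  abel

theorem augLagrangian_eq_sum_evenLocalObjective (u v : ℕ → E) :
    augLagrangian (oddObjective Q m) (evenObjective Q m) (oddRows C m) (evenRows C m) 0 ρ u v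
        (toRows (2 * m) (μ, γ))
      = ∑ i ∈ range m, evenLocalObjective Q C ρ m μ γ u i (v (2 * i + 2))
        + ∑ i ∈ range m, (Q (2 * i + 1) (u (2 * i + 1))
          + nodeTerm C ρ (μ (2 * i + 1)) (u (2 * i + 1))) := by
  rw [augLagrangian, sub_zero, add_assoc, oddRows_add_evenRows, inner_add_sq_norm_toRows,
    sum_Icc_two_mul, sum_Icc_two_mul_sub_one]
  simp only [evenLocalObjective, oddObjective, evenObjective, sum_add_distrib,
    sum_range_ite_add_one_eq, odd_two_mul_add_one, Nat.not_odd_two_mul_add_two, Nat.odd_add_one,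
    if_true, if_false, not_false_eq_true, add_assoc, Nat.reduceAdd]
  abel

theorem augLagrangian_le_of_oddLocalObjective_le {x v : ℕ → E}
    (h : ∀ i < m, ∀ a, oddLocalObjective Q C ρ μ γ v i (x (2 * i + 1))
      ≤ oddLocalObjective Q C ρ μ γ v i a) (u : ℕ → E) :
    augLagrangian (oddObjective Q m) (evenObjective Q m) (oddRows C m) (evenRows C m) 0 ρ x v
        (toRows (2 * m) (μ, γ))
      ≤ augLagrangian (oddObjective Q m) (evenObjective Q m) (oddRows C m) (evenRows C m) 0 ρ u v
        (toRows (2 * m) (μ, γ)) := by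
  rw [augLagrangian_eq_sum_oddLocalObjective, augLagrangian_eq_sum_oddLocalObjective]
  gcongr with i hi
  exact h i (mem_range.1 hi) _

theorem augLagrangian_le_of_evenLocalObjective_le {u z : ℕ → E}
    (h : ∀ i < m, ∀ a, evenLocalObjective Q C ρ m μ γ u i (z (2 * i + 2))
      ≤ evenLocalObjective Q C ρ m μ γ u i a) (v : ℕ → E) :
    augLagrangian (oddObjective Q m) (evenObjective Q m) (oddRows C m) (evenRows C m) 0 ρ u z
        (toRows (2 * m) (μ, γ))
      ≤ augLagrangian (oddObjective Q m) (evenObjective Q m) (oddRows C m) (evenRows C m) 0 ρ u v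
        (toRows (2 * m) (μ, γ)) := by
  rw [augLagrangian_eq_sum_evenLocalObjective, augLagrangian_eq_sum_evenLocalObjective]
  gcongr with i hi
  exact h i (mem_range.1 hi) _

theorem oddLocalObjective_le_of_forall_le {x v : ℕ → E}
    (hfirst : ∀ z, Q 1 (x 1) + μ 1 * ⟪C, x 1⟫ + ρ / 2 * ⟪C, x 1⟫ ^ 2
          + ⟪γ 1, x 1 - v 2⟫ + ρ / 2 * ‖x 1 - v 2‖ ^ 2
        ≤ Q 1 z + μ 1 * ⟪C, z⟫ + ρ / 2 * ⟪C, z⟫ ^ 2 + ⟪γ 1, z - v 2⟫ + ρ / 2 * ‖z - v 2‖ ^ 2)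
    (hodd : ∀ k, Odd k → 1 < k → k < 2 * m → ∀ z,
      Q k (x k) + μ k * ⟪C, x k⟫ + ρ / 2 * ⟪C, x k⟫ ^ 2
          + ⟪γ (k - 1), v (k - 1) - x k⟫ + ⟪γ k, x k - v (k + 1)⟫
          + ρ / 2 * ‖v (k - 1) - x k‖ ^ 2 + ρ / 2 * ‖x k - v (k + 1)‖ ^ 2
        ≤ Q k z + μ k * ⟪C, z⟫ + ρ / 2 * ⟪C, z⟫ ^ 2
          + ⟪γ (k - 1), v (k - 1) - z⟫ + ⟪γ k, z - v (k + 1)⟫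
          + ρ / 2 * ‖v (k - 1) - z‖ ^ 2 + ρ / 2 * ‖z - v (k + 1)‖ ^ 2)
    {i : ℕ} (hi : i < m) (a : E) :
    oddLocalObjective Q C ρ μ γ v i (x (2 * i + 1)) ≤ oddLocalObjective Q C ρ μ γ v i a := by
  rcases Nat.eq_zero_or_pos i with rfl | hi0
  · simp only [oddLocalObjective, nodeTerm, edgeTerm, if_true]
    linarith [hfirst a]
  · have h := hodd (2 * i + 1) (odd_two_mul_add_one i) (by omega) (by omega) a
    simp only [Nat.add_sub_cancel] at h
    simp only [oddLocalObjective, nodeTerm, edgeTerm, if_neg hi0.ne']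
    linarith

theorem evenLocalObjective_le_of_forall_le {u z : ℕ → E}
    (heven : ∀ k, Even k → 0 < k → k < 2 * m → ∀ w,
      Q k (z k) + μ k * ⟪C, z k⟫ + ρ / 2 * ⟪C, z k⟫ ^ 2
          + ⟪γ (k - 1), u (k - 1) - z k⟫ + ⟪γ k, z k - u (k + 1)⟫
          + ρ / 2 * ‖u (k - 1) - z k‖ ^ 2 + ρ / 2 * ‖z k - u (k + 1)‖ ^ 2
        ≤ Q k w + μ k * ⟪C, w⟫ + ρ / 2 * ⟪C, w⟫ ^ 2
          + ⟪γ (k - 1), u (k - 1) - w⟫ + ⟪γ k, w - u (k + 1)⟫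
          + ρ / 2 * ‖u (k - 1) - w‖ ^ 2 + ρ / 2 * ‖w - u (k + 1)‖ ^ 2)
    (hlast : ∀ w, Q (2 * m) (z (2 * m)) + μ (2 * m) * ⟪C, z (2 * m)⟫
          + ρ / 2 * ⟪C, z (2 * m)⟫ ^ 2 + ⟪γ (2 * m - 1), u (2 * m - 1) - z (2 * m)⟫
          + ρ / 2 * ‖u (2 * m - 1) - z (2 * m)‖ ^ 2
        ≤ Q (2 * m) w + μ (2 * m) * ⟪C, w⟫ + ρ / 2 * ⟪C, w⟫ ^ 2
          + ⟪γ (2 * m - 1), u (2 * m - 1) - w⟫ + ρ / 2 * ‖u (2 * m - 1) - w‖ ^ 2)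
    {i : ℕ} (hi : i < m) (a : E) :
    evenLocalObjective Q C ρ m μ γ u i (z (2 * i + 2))
      ≤ evenLocalObjective Q C ρ m μ γ u i a := by
  by_cases hi_last : i + 1 = m
  · have h := hlast a
    rw [← hi_last, show 2 * (i + 1) = 2 * i + 2 by ring,
      show 2 * i + 2 - 1 = 2 * i + 1 by omega] at h
    simp only [evenLocalObjective, nodeTerm, edgeTerm, if_pos hi_last]
    linarith
  · have h := heven (2 * i + 2) ⟨i + 1, by ring⟩ (by omega) (by omega) a
    rw [show 2 * i + 2 - 1 = 2 * i + 1 by omega] at h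
    simp only [evenLocalObjective, nodeTerm, edgeTerm, if_neg hi_last]
    linarith

theorem toRows_eq_add_smul_toRows {K : ℕ} {μ' : ℕ → ℝ} {γ' x : ℕ → E}
    (hμ : ∀ k ∈ Icc 1 K, μ' k = μ k + ρ * ⟪C, x k⟫)
    (hγ : ∀ k ∈ Icc 1 (K - 1), γ' k = γ k + ρ • (x k - x (k + 1))) :
    toRows K (μ', γ') = toRows K (μ, γ) + ρ • toRows K (constraintMap C x) := by
  rw [← map_smul, ← map_add]
  exact toRows_congr hμ hγ

theorem convexOn_oddObjective (hQ : ∀ i < m, ConvexOn ℝ Set.univ (Q (2 * i + 1))) :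
    ConvexOn ℝ Set.univ (oddObjective Q m) :=
  convexOn_univ_sum _ fun i hi =>
    (hQ i (mem_range.1 hi)).comp_linearMap (LinearMap.proj (R := ℝ) (φ := fun _ : ℕ => E) _)

theorem convexOn_evenObjective (hQ : ∀ i < m, ConvexOn ℝ Set.univ (Q (2 * i + 2))) :
    ConvexOn ℝ Set.univ (evenObjective Q m) :=
  convexOn_univ_sum _ fun i hi =>
    (hQ i (mem_range.1 hi)).comp_linearMap (LinearMap.proj (R := ℝ) (φ := fun _ : ℕ => E) _)

theorem oddRows_add_evenRows_const {ζs : E} (hCζs : ⟪C, ζs⟫ = 0) :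
    oddRows C m (fun _ => ζs) + evenRows C m (fun _ => ζs) = 0 := by
  rw [oddRows_add_evenRows_self, ← map_zero (toRows (2 * m))]
  exact toRows_congr (fun k _ => hCζs) (fun k _ => sub_self ζs)

theorem oddObjective_add_evenObjective_const_le {ζs : E}
    (h : ∀ w : ℕ → E, ∑ k ∈ Icc 1 (2 * m), Q k ζs ≤ ∑ k ∈ Icc 1 (2 * m), Q k (w k)
      + ∑ k ∈ Icc 1 (2 * m), μ k * ⟪C, w k⟫ + ∑ k ∈ Icc 1 (2 * m - 1), ⟪γ k, w k - w (k + 1)⟫)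
    (u v : ℕ → E) :
    oddObjective Q m (fun _ => ζs) + evenObjective Q m (fun _ => ζs)
      ≤ oddObjective Q m u + evenObjective Q m v
        + ⟪toRows (2 * m) (μ, γ), oddRows C m u + evenRows C m v - 0⟫ := by
  have := h fun k => if Odd k then u k else v k
  rw [sum_Icc_two_mul, sum_Icc_two_mul] at this
  rw [sub_zero, oddRows_add_evenRows, inner_toRows]
  simp only [oddObjective, evenObjective, constraintMap, LinearMap.coe_mk, AddHom.coe_mk,
    sum_add_distrib, odd_two_mul_add_one, Nat.not_odd_two_mul_add_two, if_true, if_false] at this ⊢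
  linarith

theorem tendsto_sub_succ_of_tendsto_toRows {K : ℕ} {ζ : ℕ → ℕ → E}
    (h : Tendsto (fun l => toRows K (constraintMap C (ζ l))) atTop (𝓝 0)) :
    ∀ k ∈ Icc 1 (K - 1), Tendsto (fun l => ζ l k - ζ l (k + 1)) atTop (𝓝 0) := fun _ hk =>
  squeeze_zero_norm (fun l => norm_le_norm_toRows (constraintMap C (ζ l)) hk)
    (tendsto_zero_iff_norm_tendsto_zero.1 h)

end DSGCDMM

theorem dsgcdmm_consensus_residual_tendsto_zero_general
    (d K : ℕ) (hKeven : Even K)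
    (n : ℕ → ℕ)
    (y : ∀ k, EuclideanSpace ℝ (Fin (n k)))
    (P : ∀ k, Matrix (Fin (n k)) (Fin d) ℝ)
    (lam : ℝ) (hlam : 0 ≤ lam)
    (ω : ℕ → Fin d → ℝ) (hω : ∀ k ∈ Icc 1 K, ∀ j, 0 ≤ ω k j)
    (C : EuclideanSpace ℝ (Fin d))
    (Q : ℕ → EuclideanSpace ℝ (Fin d) → ℝ)
    (hQ : ∀ k, ∀ x : EuclideanSpace ℝ (Fin d), Q k x =
      (1 / (2 * (n k : ℝ))) * ‖y k - (P k).toEuclideanLin x‖ ^ 2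
        + lam * ∑ j, ω k j * |x j|)
    (ρ : ℝ) (hρ : 0 < ρ)
    (ζ : ℕ → ℕ → EuclideanSpace ℝ (Fin d))
    (μ : ℕ → ℕ → ℝ)
    (γ : ℕ → ℕ → EuclideanSpace ℝ (Fin d))
    (hdyn1 : ∀ l : ℕ, ∀ z : EuclideanSpace ℝ (Fin d),
      Q 1 (ζ (l+1) 1) + μ l 1 * ⟪C, ζ (l+1) 1⟫ + (ρ/2) * ⟪C, ζ (l+1) 1⟫ ^ 2
          + ⟪γ l 1, ζ (l+1) 1 - ζ l 2⟫ + (ρ/2) * ‖ζ (l+1) 1 - ζ l 2‖ ^ 2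
        ≤ Q 1 z + μ l 1 * ⟪C, z⟫ + (ρ/2) * ⟪C, z⟫ ^ 2
          + ⟪γ l 1, z - ζ l 2⟫ + (ρ/2) * ‖z - ζ l 2‖ ^ 2)
    (hdynodd : ∀ l : ℕ, ∀ k, Odd k → 1 < k → k < K → ∀ z : EuclideanSpace ℝ (Fin d),
      Q k (ζ (l+1) k) + μ l k * ⟪C, ζ (l+1) k⟫ + (ρ/2) * ⟪C, ζ (l+1) k⟫ ^ 2
          + ⟪γ l (k-1), ζ l (k-1) - ζ (l+1) k⟫ + ⟪γ l k, ζ (l+1) k - ζ l (k+1)⟫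
          + (ρ/2) * ‖ζ l (k-1) - ζ (l+1) k‖ ^ 2 + (ρ/2) * ‖ζ (l+1) k - ζ l (k+1)‖ ^ 2
        ≤ Q k z + μ l k * ⟪C, z⟫ + (ρ/2) * ⟪C, z⟫ ^ 2
          + ⟪γ l (k-1), ζ l (k-1) - z⟫ + ⟪γ l k, z - ζ l (k+1)⟫
          + (ρ/2) * ‖ζ l (k-1) - z‖ ^ 2 + (ρ/2) * ‖z - ζ l (k+1)‖ ^ 2)
    (hdyneven : ∀ l : ℕ, ∀ k, Even k → 0 < k → k < K → ∀ z : EuclideanSpace ℝ (Fin d),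
      Q k (ζ (l+1) k) + μ l k * ⟪C, ζ (l+1) k⟫ + (ρ/2) * ⟪C, ζ (l+1) k⟫ ^ 2
          + ⟪γ l (k-1), ζ (l+1) (k-1) - ζ (l+1) k⟫ + ⟪γ l k, ζ (l+1) k - ζ (l+1) (k+1)⟫
          + (ρ/2) * ‖ζ (l+1) (k-1) - ζ (l+1) k‖ ^ 2 + (ρ/2) * ‖ζ (l+1) k - ζ (l+1) (k+1)‖ ^ 2
        ≤ Q k z + μ l k * ⟪C, z⟫ + (ρ/2) * ⟪C, z⟫ ^ 2
          + ⟪γ l (k-1), ζ (l+1) (k-1) - z⟫ + ⟪γ l k, z - ζ (l+1) (k+1)⟫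
          + (ρ/2) * ‖ζ (l+1) (k-1) - z‖ ^ 2 + (ρ/2) * ‖z - ζ (l+1) (k+1)‖ ^ 2)
    (hdynK : ∀ l : ℕ, ∀ z : EuclideanSpace ℝ (Fin d),
      Q K (ζ (l+1) K) + μ l K * ⟪C, ζ (l+1) K⟫ + (ρ/2) * ⟪C, ζ (l+1) K⟫ ^ 2
          + ⟪γ l (K-1), ζ (l+1) (K-1) - ζ (l+1) K⟫ + (ρ/2) * ‖ζ (l+1) (K-1) - ζ (l+1) K‖ ^ 2
        ≤ Q K z + μ l K * ⟪C, z⟫ + (ρ/2) * ⟪C, z⟫ ^ 2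
          + ⟪γ l (K-1), ζ (l+1) (K-1) - z⟫ + (ρ/2) * ‖ζ (l+1) (K-1) - z‖ ^ 2)
    (hμ : ∀ l : ℕ, ∀ k ∈ Icc 1 K, μ (l+1) k = μ l k + ρ * ⟪C, ζ (l+1) k⟫)
    (hγ : ∀ l : ℕ, ∀ k ∈ Icc 1 (K-1),
      γ (l+1) k = γ l k + ρ • (ζ (l+1) k - ζ (l+1) (k+1)))
    (ζs : EuclideanSpace ℝ (Fin d)) (μs : ℕ → ℝ) (γs : ℕ → EuclideanSpace ℝ (Fin d))
    (hCζs : ⟪C, ζs⟫ = 0)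
    (hsaddle : ∀ zf : ℕ → EuclideanSpace ℝ (Fin d),
      (∑ k ∈ Icc 1 K, Q k ζs) + (∑ k ∈ Icc 1 K, μs k * ⟪C, ζs⟫)
          + (∑ k ∈ Icc 1 (K-1), ⟪γs k, ζs - ζs⟫)
        ≤ (∑ k ∈ Icc 1 K, Q k (zf k)) + (∑ k ∈ Icc 1 K, μs k * ⟪C, zf k⟫)
          + (∑ k ∈ Icc 1 (K-1), ⟪γs k, zf k - zf (k+1)⟫))
    :
    ∀ k ∈ Icc 1 (K-1),
      Tendsto (fun l : ℕ => ζ l k - ζ l (k+1)) atTop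
        (nhds (0 : EuclideanSpace ℝ (Fin d))) := by
  obtain ⟨m, rfl⟩ := even_iff_two_dvd.mp hKeven
  have hconv : ∀ k ∈ Icc 1 (2 * m), ConvexOn ℝ Set.univ (Q k) := fun k hk => by
    rw [show Q k = _ from funext (hQ k)]
    exact convexOn_univ_lasso (y k) (P k) (by positivity) hlam (hω k hk)
  have hres := admm_residual_tendsto_zero
    (convexOn_oddObjective fun i hi => hconv _ (mem_Icc.2 ⟨by omega, by omega⟩))
    (convexOn_evenObjective fun i hi => hconv _ (mem_Icc.2 ⟨by omega, by omega⟩)) hρ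
    (x := ζ) (z := ζ) (y := fun l => toRows (2 * m) (μ l, γ l))
    (fun l => augLagrangian_le_of_oddLocalObjective_le fun _ hi =>
      oddLocalObjective_le_of_forall_le (hdyn1 l) (hdynodd l) hi)
    (fun l => augLagrangian_le_of_evenLocalObjective_le fun _ hi =>
      evenLocalObjective_le_of_forall_le (hdyneven l) (hdynK l) hi)
    (fun l => by
      rw [sub_zero, oddRows_add_evenRows_self]
      exact toRows_eq_add_smul_toRows (hμ l) (hγ l))
    (oddRows_add_evenRows_const hCζs)
    (oddObjective_add_evenObjective_const_le fun w => by simpa [hCζs] using hsaddle w)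
  exact tendsto_sub_succ_of_tendsto_toRows (by simpa [oddRows_add_evenRows_self] using hres)

/-- Theorem 1, part 2: the primal residual of the consensus constraint converges to zero, r_k^l = ζ_k^l − ζ_{k+1}^l → 0. -/
theorem dsgcdmm_consensus_residual_tendsto_zero
    (d K : ℕ) (hd : 1 ≤ d) (hK : 2 ≤ K) (hKeven : Even K)
    (n : ℕ → ℕ) (hn : ∀ k ∈ Icc 1 K, 1 ≤ n k)
    (y : ∀ k, EuclideanSpace ℝ (Fin (n k)))
    (P : ∀ k, Matrix (Fin (n k)) (Fin d) ℝ)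
    (lam : ℝ) (hlam : 0 ≤ lam)
    (ω : ℕ → Fin d → ℝ) (hω : ∀ k ∈ Icc 1 K, ∀ j, 0 ≤ ω k j)
    (C : EuclideanSpace ℝ (Fin d))
    (Q : ℕ → EuclideanSpace ℝ (Fin d) → ℝ)
    (hQ : ∀ k, ∀ x : EuclideanSpace ℝ (Fin d), Q k x =
      (1 / (2 * (n k : ℝ))) * ‖y k - (P k).toEuclideanLin x‖ ^ 2
        + lam * ∑ j, ω k j * |x j|)
    (ρ : ℝ) (hρ : 0 < ρ)
    (ζ : ℕ → ℕ → EuclideanSpace ℝ (Fin d))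
    (μ : ℕ → ℕ → ℝ)
    (γ : ℕ → ℕ → EuclideanSpace ℝ (Fin d))
    (hdyn1 : ∀ l : ℕ, ∀ z : EuclideanSpace ℝ (Fin d),
      Q 1 (ζ (l+1) 1) + μ l 1 * ⟪C, ζ (l+1) 1⟫ + (ρ/2) * ⟪C, ζ (l+1) 1⟫ ^ 2
          + ⟪γ l 1, ζ (l+1) 1 - ζ l 2⟫ + (ρ/2) * ‖ζ (l+1) 1 - ζ l 2‖ ^ 2
        ≤ Q 1 z + μ l 1 * ⟪C, z⟫ + (ρ/2) * ⟪C, z⟫ ^ 2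
          + ⟪γ l 1, z - ζ l 2⟫ + (ρ/2) * ‖z - ζ l 2‖ ^ 2)
    (hdynodd : ∀ l : ℕ, ∀ k, Odd k → 1 < k → k < K → ∀ z : EuclideanSpace ℝ (Fin d),
      Q k (ζ (l+1) k) + μ l k * ⟪C, ζ (l+1) k⟫ + (ρ/2) * ⟪C, ζ (l+1) k⟫ ^ 2
          + ⟪γ l (k-1), ζ l (k-1) - ζ (l+1) k⟫ + ⟪γ l k, ζ (l+1) k - ζ l (k+1)⟫
          + (ρ/2) * ‖ζ l (k-1) - ζ (l+1) k‖ ^ 2 + (ρ/2) * ‖ζ (l+1) k - ζ l (k+1)‖ ^ 2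
        ≤ Q k z + μ l k * ⟪C, z⟫ + (ρ/2) * ⟪C, z⟫ ^ 2
          + ⟪γ l (k-1), ζ l (k-1) - z⟫ + ⟪γ l k, z - ζ l (k+1)⟫
          + (ρ/2) * ‖ζ l (k-1) - z‖ ^ 2 + (ρ/2) * ‖z - ζ l (k+1)‖ ^ 2)
    (hdyneven : ∀ l : ℕ, ∀ k, Even k → 0 < k → k < K → ∀ z : EuclideanSpace ℝ (Fin d),
      Q k (ζ (l+1) k) + μ l k * ⟪C, ζ (l+1) k⟫ + (ρ/2) * ⟪C, ζ (l+1) k⟫ ^ 2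
          + ⟪γ l (k-1), ζ (l+1) (k-1) - ζ (l+1) k⟫ + ⟪γ l k, ζ (l+1) k - ζ (l+1) (k+1)⟫
          + (ρ/2) * ‖ζ (l+1) (k-1) - ζ (l+1) k‖ ^ 2 + (ρ/2) * ‖ζ (l+1) k - ζ (l+1) (k+1)‖ ^ 2
        ≤ Q k z + μ l k * ⟪C, z⟫ + (ρ/2) * ⟪C, z⟫ ^ 2
          + ⟪γ l (k-1), ζ (l+1) (k-1) - z⟫ + ⟪γ l k, z - ζ (l+1) (k+1)⟫
          + (ρ/2) * ‖ζ (l+1) (k-1) - z‖ ^ 2 + (ρ/2) * ‖z - ζ (l+1) (k+1)‖ ^ 2)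
    (hdynK : ∀ l : ℕ, ∀ z : EuclideanSpace ℝ (Fin d),
      Q K (ζ (l+1) K) + μ l K * ⟪C, ζ (l+1) K⟫ + (ρ/2) * ⟪C, ζ (l+1) K⟫ ^ 2
          + ⟪γ l (K-1), ζ (l+1) (K-1) - ζ (l+1) K⟫ + (ρ/2) * ‖ζ (l+1) (K-1) - ζ (l+1) K‖ ^ 2
        ≤ Q K z + μ l K * ⟪C, z⟫ + (ρ/2) * ⟪C, z⟫ ^ 2
          + ⟪γ l (K-1), ζ (l+1) (K-1) - z⟫ + (ρ/2) * ‖ζ (l+1) (K-1) - z‖ ^ 2)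
    (hμ : ∀ l : ℕ, ∀ k ∈ Icc 1 K, μ (l+1) k = μ l k + ρ * ⟪C, ζ (l+1) k⟫)
    (hγ : ∀ l : ℕ, ∀ k ∈ Icc 1 (K-1),
      γ (l+1) k = γ l k + ρ • (ζ (l+1) k - ζ (l+1) (k+1)))
    (ζs : EuclideanSpace ℝ (Fin d)) (μs : ℕ → ℝ) (γs : ℕ → EuclideanSpace ℝ (Fin d))
    (hCζs : ⟪C, ζs⟫ = 0)
    (hmin : ∀ z : EuclideanSpace ℝ (Fin d), ⟪C, z⟫ = 0 →
      ∑ k ∈ Icc 1 K, Q k ζs ≤ ∑ k ∈ Icc 1 K, Q k z)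
    (hsaddle : ∀ zf : ℕ → EuclideanSpace ℝ (Fin d),
      (∑ k ∈ Icc 1 K, Q k ζs) + (∑ k ∈ Icc 1 K, μs k * ⟪C, ζs⟫)
          + (∑ k ∈ Icc 1 (K-1), ⟪γs k, ζs - ζs⟫)
        ≤ (∑ k ∈ Icc 1 K, Q k (zf k)) + (∑ k ∈ Icc 1 K, μs k * ⟪C, zf k⟫)
          + (∑ k ∈ Icc 1 (K-1), ⟪γs k, zf k - zf (k+1)⟫))
    :
    ∀ k ∈ Icc 1 (K-1),
      Tendsto (fun l : ℕ => ζ l k - ζ l (k+1)) atTop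
        (nhds (0 : EuclideanSpace ℝ (Fin d))) :=
  dsgcdmm_consensus_residual_tendsto_zero_general d K hKeven n y P lam hlam ω hω C Q hQ ρ hρ ζ μ γ
    hdyn1 hdynodd hdyneven hdynK hμ hγ ζs μs γs hCζs hsaddle
end
end
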